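/- Let R and S be rings and let F be an equivalence from the category of right R-modules to the category of right S-modules. If M is a non-singular right R-module, then F(M) is a non-singular right S-module. -/

import Mathlib

open MulOpposite

section Defs

variable (R : Type*) [Ring R]

/-- The right annihilator of an element of a right `R`-module (a module over `Rᵐᵒᵖ`),
as a right ideal of `R`. -/
def RightAnn (M : Type*) [AddCommGroup M] [Module Rᵐᵒᵖ M] (x : M) : Submodule Rᵐᵒᵖ R where
  carrier := {r : R | op r • x = 0}
  zero_mem' := by simp
  add_mem' := by
    intro a b ha hb
    simp only [Set.mem_setOf_eq] at *
    rw [op_add, add_smul, ha, hb, add_zero]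
  smul_mem' := by
    intro c a ha
    simp only [Set.mem_setOf_eq] at *
    have h1 : c • a = a * unop c := rfl
    rw [h1, op_mul, op_unop, mul_smul, ha, smul_zero]

/-- The right annihilator of a subset of `R`, as a set. -/
def rightAnnSet (A : Set R) : Set R := {r : R | ∀ a ∈ A, a * r = 0}

/-- The left annihilator of a subset of `R`, as a set. -/
def leftAnnSet (A : Set R) : Set R := {r : R | ∀ a ∈ A, r * a = 0}

/-- A submodule is essential if it intersects every nonzero submodule nontrivially. -/
def IsEssentialSubmodule {A : Type*} [Ring A] {M : Type*} [AddCommGroup M] [Module A M]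
    (U : Submodule A M) : Prop :=
  ∀ V : Submodule A M, U ⊓ V = ⊥ → V = ⊥

/-- A right `R`-module is non-singular if its singular submodule is zero, i.e. no
nonzero element has essential right annihilator. -/
def IsNonsingularMod (M : Type*) [AddCommGroup M] [Module Rᵐᵒᵖ M] : Prop :=
  ∀ x : M, IsEssentialSubmodule (RightAnn R M x) → x = 0

/-- A right `R`-module is singular if every element has essential right annihilator. -/
def IsSingularMod (M : Type*) [AddCommGroup M] [Module Rᵐᵒᵖ M] : Prop :=
  ∀ x : M, IsEssentialSubmodule (RightAnn R M x)

/-- Hattori torsion-freeness for right `R`-modules. -/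
def HattoriTorsionFree (M : Type*) [AddCommGroup M] [Module Rᵐᵒᵖ M] : Prop :=
  ∀ (x : M) (r : R), op r • x = 0 →
    ∃ (k : ℕ) (xs : Fin k → M) (rs : Fin k → R),
      x = ∑ i, op (rs i) • xs i ∧ ∀ i, rs i * r = 0

/-- A ring is torsion-free if every finitely generated right ideal is a torsion-free
right `R`-module. -/
def IsTorsionFreeRing : Prop :=
  ∀ I : Submodule Rᵐᵒᵖ R, I.FG → HattoriTorsionFree R I

/-- A ring is a right p.p.-ring if every principal right ideal is projective. -/
def IsRightPPRing : Prop :=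
  ∀ x : R, Module.Projective Rᵐᵒᵖ (Submodule.span Rᵐᵒᵖ ({x} : Set R))

/-- A ring is a left p.p.-ring if every principal left ideal is projective. -/
def IsLeftPPRing : Prop :=
  ∀ x : R, Module.Projective R (Submodule.span R ({x} : Set R))

/-- A ring is right semi-hereditary if every finitely generated right ideal is projective. -/
def IsRightSemihereditary : Prop :=
  ∀ I : Submodule Rᵐᵒᵖ R, I.FG → Module.Projective Rᵐᵒᵖ I

/-- `R` contains no infinite set of (nonzero, pairwise) orthogonal idempotents. -/
def NoInfiniteOrthogonalIdempotents : Prop :=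
  ∀ S : Set R, (∀ e ∈ S, e * e = e ∧ e ≠ 0) →
    (∀ e ∈ S, ∀ f ∈ S, e ≠ f → e * f = 0 ∧ f * e = 0) → S.Finite

/-- A ring is Baer if the right annihilator of every subset is generated, as a right
ideal, by an idempotent. -/
def IsBaerRing : Prop :=
  ∀ A : Set R, ∃ e : R, e * e = e ∧ rightAnnSet R A = {y : R | ∃ r : R, y = e * r}

/-- A ring is right Utumi if it is right non-singular and every S-closed right ideal
is a right annihilator. -/
def IsRightUtumi : Prop :=
  IsNonsingularMod R R ∧
    ∀ I : Submodule Rᵐᵒᵖ R, IsNonsingularMod R (R ⧸ I) →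
      ∃ A : Set R, (I : Set R) = rightAnnSet R A

/-- The left annihilator of an element of a left `R`-module, as a left ideal of `R`. -/
def LeftAnn (M : Type*) [AddCommGroup M] [Module R M] (x : M) : Submodule R R :=
  LinearMap.ker (LinearMap.toSpanSingleton R M x)

/-- A left `R`-module is non-singular if no nonzero element has essential left annihilator. -/
def IsLeftNonsingularMod (M : Type*) [AddCommGroup M] [Module R M] : Prop :=
  ∀ x : M, IsEssentialSubmodule (LeftAnn R M x) → x = 0

/-- A ring is left Utumi if it is left non-singular and every S-closed left ideal is a
left annihilator. -/
def IsLeftUtumi : Prop :=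
  IsLeftNonsingularMod R R ∧
    ∀ I : Submodule R R, IsLeftNonsingularMod R (R ⧸ I) →
      ∃ A : Set R, (I : Set R) = leftAnnSet R A

end Defs

/-!
An element `y` of a right `R`-module `N` is singular exactly when the map `R → N`, `r ↦ y r`, has
essential kernel, so `N` is non-singular iff every morphism into `N` with essential kernel is zero.
For a morphism `f : X → Y` of modules, `ker f` is essential iff every `g : Z → X` with `g ≫ f`
monic has `Z = 0`. This condition is categorical, hence preserved by the inverse of `F`, and the
unit isomorphism `F⁻¹ (F M) ≅ M` carries non-singularity from `M` to `F M`.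
-/

open CategoryTheory Limits

universe u

theorem IsEssentialSubmodule.comap {A : Type*} [Ring A] {P Q : Type*} [AddCommGroup P]
    [AddCommGroup Q] [Module A P] [Module A Q] {U : Submodule A Q} (hU : IsEssentialSubmodule U)
    (f : P →ₗ[A] Q) : IsEssentialSubmodule (U.comap f) := by
  intro V hV
  have hmap : V.map f = ⊥ := by
    refine hU _ (Submodule.disjoint_def.mpr ?_).eq_bot
    rintro _ hy ⟨v, hv, rfl⟩
    have hv0 : v ∈ U.comap f ⊓ V := ⟨hy, hv⟩
    rw [hV, Submodule.mem_bot] at hv0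
    rw [hv0, map_zero]
  have hle : V ≤ U.comap f := fun v hv => by
    have hfv : f v ∈ V.map f := Submodule.mem_map_of_mem hv
    rw [hmap, Submodule.mem_bot] at hfv
    rw [Submodule.mem_comap, hfv]
    exact U.zero_mem
  rwa [inf_eq_right.mpr hle] at hV

/-- The categorical form of "`ker f` is essential" (see `ModuleCat.isEssentialSubmodule_ker_iff`). -/
def CategoryTheory.HasEssentialKernel {C : Type*} [Category C] {X Y : C} (f : X ⟶ Y) : Prop :=
  ∀ ⦃Z : C⦄ (g : Z ⟶ X), Mono (g ≫ f) → IsZero Z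

namespace CategoryTheory.HasEssentialKernel

variable {C D : Type*} [Category C] [Category D] {X Y : C} {f : X ⟶ Y}

theorem comp_iso (hf : HasEssentialKernel f) {Y' : C} (i : Y ≅ Y') :
    HasEssentialKernel (f ≫ i.hom) := fun _ g hg => by
  rw [← Category.assoc] at hg
  exact hf g (mono_of_mono _ i.hom)

theorem map [HasZeroMorphisms C] [HasZeroMorphisms D] (hf : HasEssentialKernel f) (F : C ⥤ D)
    [F.IsEquivalence] : HasEssentialKernel (F.map f) := by
  intro Z g hg
  let e := F.objObjPreimageIso Z
  have hmono : Mono (F.map (F.preimage (e.hom ≫ g) ≫ f)) := by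
    rw [F.map_comp, F.map_preimage, Category.assoc]
    infer_instance
  exact (F.map_isZero (hf _ (F.mono_of_mono_map hmono))).of_iso e.symm

end CategoryTheory.HasEssentialKernel

theorem ModuleCat.isEssentialSubmodule_ker_iff {A : Type u} [Ring A] {X Y : ModuleCat.{u} A}
    (f : X ⟶ Y) : IsEssentialSubmodule (LinearMap.ker f.hom) ↔ HasEssentialKernel f := by
  constructor
  · intro hf Z g hg
    have hinj := (ModuleCat.mono_iff_injective _).mp hg
    have hdisj : LinearMap.ker f.hom ⊓ LinearMap.range g.hom = ⊥ := by
      refine (Submodule.disjoint_def.mpr ?_).eq_bot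
      rintro _ hx ⟨z, rfl⟩
      rw [hinj (show (g ≫ f) z = (g ≫ f) 0 by simpa using hx), map_zero]
    have hg0 : ∀ z, g z = 0 := fun z => (Submodule.mem_bot A).mp (hf _ hdisj ▸ ⟨z, rfl⟩)
    rw [ModuleCat.isZero_iff_subsingleton]
    exact ⟨fun a b => hinj (by simp [hg0])⟩
  · intro hf V hV
    have hmono : Mono (ModuleCat.ofHom V.subtype ≫ f) := by
      rw [ModuleCat.mono_iff_injective]
      change Function.Injective (f.hom ∘ₗ V.subtype)
      rw [← LinearMap.ker_eq_bot, LinearMap.ker_comp,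
        ← Submodule.disjoint_iff_comap_eq_bot, disjoint_comm, disjoint_iff]
      exact hV
    have : Subsingleton V := ModuleCat.subsingleton_of_isZero (hf _ hmono)
    exact Submodule.eq_bot_of_subsingleton

section RightModule

open MulOpposite

variable (R : Type*) [Ring R] {M N : Type*} [AddCommGroup M] [Module Rᵐᵒᵖ M]
  [AddCommGroup N] [Module Rᵐᵒᵖ N]

def toSpanSingletonRight (x : M) : R →ₗ[Rᵐᵒᵖ] M where
  toFun r := op r • x
  map_add' r s := by rw [MulOpposite.op_add, add_smul]
  map_smul' c r := by
    change op (r * unop c) • x = c • op r • x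
    rw [op_mul, op_unop, mul_smul]

@[simp]
theorem toSpanSingletonRight_apply (x : M) (r : R) : toSpanSingletonRight R x r = op r • x := rfl

theorem ker_toSpanSingletonRight (x : M) :
    LinearMap.ker (toSpanSingletonRight R x) = RightAnn R M x := rfl

variable {R}

theorem IsNonsingularMod.eq_zero_of_isEssentialSubmodule_ker (hM : IsNonsingularMod R M)
    (f : N →ₗ[Rᵐᵒᵖ] M) (hf : IsEssentialSubmodule (LinearMap.ker f)) : f = 0 := by
  ext a
  apply hM
  have hann : RightAnn R M (f a) = (LinearMap.ker f).comap (toSpanSingletonRight R a) := by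
    rw [← LinearMap.ker_comp, ← ker_toSpanSingletonRight]
    congr 1
    ext
    simp
  rw [hann]
  exact hf.comap _

end RightModule

theorem isNonsingularMod_iff_forall_hasEssentialKernel {R : Type u} [Ring R]
    (M : ModuleCat.{u} Rᵐᵒᵖ) :
    IsNonsingularMod R M ↔ ∀ ⦃N : ModuleCat.{u} Rᵐᵒᵖ⦄ (f : N ⟶ M), HasEssentialKernel f → f = 0 := by
  refine ⟨fun hM N f hf => ?_, fun hM x hx => ?_⟩
  · ext1
    exact hM.eq_zero_of_isEssentialSubmodule_ker _ ((ModuleCat.isEssentialSubmodule_ker_iff f).mpr hf)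
  · let h : ModuleCat.of Rᵐᵒᵖ R ⟶ M := ModuleCat.ofHom (toSpanSingletonRight R x)
    have h0 : h = 0 := hM h ((ModuleCat.isEssentialSubmodule_ker_iff h).mp hx)
    simpa [h] using congr($h0 (1 : R))

/-- If `F` is an equivalence from right `R`-modules to right `S`-modules and `M` is a
non-singular right `R`-module, then `F(M)` is a non-singular right `S`-module. -/
theorem stmt_17 (R : Type u) (S : Type u) [Ring R] [Ring S]
    (F : ModuleCat.{u} Rᵐᵒᵖ ⥤ ModuleCat.{u} Sᵐᵒᵖ) [F.IsEquivalence]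
    (M : ModuleCat.{u} Rᵐᵒᵖ) (hM : IsNonsingularMod R M) :
    IsNonsingularMod S (F.obj M) := by
  rw [isNonsingularMod_iff_forall_hasEssentialKernel] at hM ⊢
  intro N f hf
  apply F.inv.map_injective
  let i : F.inv.obj (F.obj M) ≅ M := (F.asEquivalence.unitIso.app M).symm
  have h0 := hM _ ((hf.map F.inv).comp_iso i)
  rwa [Preadditive.IsIso.comp_right_eq_zero, ← F.inv.map_zero] at h0
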